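/- arXiv:1212.5965 — 5 statements merged into one kernel-verified Lean document; each statement's English description precedes it below -/
import Mathlib

section
/- (1) For each n-data (a,b,κ) for A, the operator L(A,a,b,κ) is a balanced rank n singular perturbation of A. (2) Conversely, every balanced rank n singular perturbation of A has the form L(A,a,b,κ) for some n-data (a,b,κ). -/
open Complex

noncomputable section

variable {H : Type*} [NormedAddCommGroup H] [InnerProductSpace ℂ H] [CompleteSpace H]

/-- The graph of the singular perturbation `L(T, a, b, κ)` of an (unbounded) operator with
domain `dom` and action `Tfun`, built from the `n`-data `(ã, b̃, κ)`:
pairs `(y₀ + ãc, T y₀)` with `y₀ ∈ dom`, `c ∈ ℂⁿ` and `κc + (⟨T y₀, b̃ e_j⟩)_j = 0`. -/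
def pertGraph (n : ℕ) (dom : Submodule ℂ H) (Tfun : dom → H)
    (aT bT : (Fin n → ℂ) →ₗ[ℂ] H) (κ : Matrix (Fin n) (Fin n) ℂ) : Set (H × H) :=
  {p | ∃ (y₀ : dom) (c : Fin n → ℂ),
    p.1 = (y₀ : H) + aT c ∧ p.2 = Tfun y₀ ∧
    ∀ j, κ.mulVec c j + inner (𝕜 := ℂ) (bT (Pi.single j 1)) (Tfun y₀) = 0}

/-- Condition `(Aₙ)` on the `n`-data `(ã, b̃, κ)` for the operator `A`:
if `ãc ∈ D(A)` and `κc = (⟨A(ãc), b̃e_j⟩)_j`, then `c = 0`. -/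
def CondA (n : ℕ) (A : H →ₗ.[ℂ] H)
    (aT bT : (Fin n → ℂ) →ₗ[ℂ] H) (κ : Matrix (Fin n) (Fin n) ℂ) : Prop :=
  ∀ (c : Fin n → ℂ) (h : aT c ∈ A.domain),
    (∀ j, κ.mulVec c j = inner (𝕜 := ℂ) (bT (Pi.single j 1)) (A ⟨aT c, h⟩)) → c = 0

/-- `dim (G / (G ∩ G')) = n`, where the intersection is viewed inside `G`. -/
def QuotRankEq (G G' : Submodule ℂ (H × H)) (n : ℕ) : Prop :=
  Module.rank ℂ (↥G ⧸ (G ⊓ G').comap G.subtype) = (n : Cardinal)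

/-- `L` is a balanced rank `n` singular perturbation of `A` (in terms of their graphs). -/
def IsBalancedPert (n : ℕ) (Ga Gl : Submodule ℂ (H × H)) : Prop :=
  QuotRankEq Ga Gl n ∧ QuotRankEq Gl Ga n

end

/-!
Write `R = A⁻¹` and `β v = (⟪b̃ eⱼ, v⟫)ⱼ`. The graph of `A` is the kernel of the defect
`p ↦ p.1 - R p.2`, and the graph of `L(A,a,b,κ)` is
`{p | ∃ c, p.1 - R p.2 = ãc ∧ κc + β p.2 = 0}`; condition `(Aₙ)` says precisely that this
subspace contains no `(0, w)` with `w ≠ 0`, i.e. that it is a graph. Inside `G(A) ≅ H` its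
intersection with `G(L)` is `ker (β ∘ snd)`, and inside `G(L)` it is `{c = 0}`; both have
codimension `n` because `β` is onto when `b̃` is injective.

Conversely, for a closed balanced `L`, the space `M = {v | (Rv, v) ∈ G(L)}` is closed of
codimension `n`, so `M = ker β` for any `b̃` parametrizing `Mᗮ`. Lifting a basis of
`G(L) / (G(L) ∩ G(A))` to `ξ : ℂⁿ → G(L)` gives the data `ã = defect ∘ ξ` and
`κ = -β ∘ snd ∘ ξ`.
-/

open LinearMap (ker)
open Matrix
open scoped InnerProductSpace

universe u v

variable {H : Type*} [NormedAddCommGroup H] [InnerProductSpace ℂ H]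

theorem rank_quotient_eq_of_surjective {R : Type*} {E : Type u} {F : Type v} [Ring R]
    [AddCommGroup E] [Module R E] [AddCommGroup F] [Module R F] {N : Submodule R E}
    (g : E →ₗ[R] F) (hg : Function.Surjective g) (hker : ker g = N) :
    Cardinal.lift.{v} (Module.rank R (E ⧸ N)) = Cardinal.lift.{u} (Module.rank R F) :=
  hker ▸ (g.quotKerEquivOfSurjective hg).lift_rank_eq

theorem exists_linearMap_complement_of_rank {K E : Type*} [Field K] [AddCommGroup E] [Module K E]
    {n : ℕ} {P Q : Submodule K E} (h : Module.rank K (P ⧸ (P ⊓ Q).comap P.subtype) = n) :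
    ∃ ξ : (Fin n → K) →ₗ[K] E, (∀ c, ξ c ∈ P) ∧ (∀ c, ξ c ∈ Q → c = 0) ∧
      ∀ p ∈ P, ∃ c, p - ξ c ∈ Q := by
  set N := (P ⊓ Q).comap P.subtype
  obtain ⟨C, hC⟩ := N.exists_isCompl
  have hrank : Module.rank K C = n := by
    rw [← (N.quotientEquivOfIsCompl C hC).rank_eq, h]
  have := Module.finite_of_rank_eq_nat hrank
  let e : (Fin n → K) ≃ₗ[K] C := LinearEquiv.ofFinrankEq _ _ (by
    rw [Module.finrank_fin_fun, Module.finrank_eq_of_rank_eq hrank])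
  refine ⟨P.subtype ∘ₗ C.subtype ∘ₗ e.toLinearMap, fun c => (e c : P).2, fun c hc => ?_,
    fun p hp => ?_⟩
  · have hN : (e c : P) ∈ N := ⟨(e c : P).2, hc⟩
    have : (e c : P) = 0 := Submodule.disjoint_def.1 hC.disjoint _ hN (e c).2
    simpa using this
  · obtain ⟨x, y, hx, hy, hxy⟩ := Submodule.codisjoint_iff_exists_add_eq.1 hC.codisjoint ⟨p, hp⟩
    refine ⟨e.symm ⟨y, hy⟩, ?_⟩
    have hp' : p = x + y := by rw [← Submodule.coe_add, hxy]
    simpa [hp'] using (Submodule.mem_inf.1 hx).2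

section InnerPi

variable {n : ℕ}

noncomputable def innerPi (bT : (Fin n → ℂ) →ₗ[ℂ] H) : H →ₗ[ℂ] (Fin n → ℂ) :=
  LinearMap.pi fun j => (innerSL ℂ (bT (Pi.single j 1)) : H →ₗ[ℂ] ℂ)

@[simp]
theorem innerPi_apply (bT : (Fin n → ℂ) →ₗ[ℂ] H) (v : H) (j : Fin n) :
    innerPi bT v j = ⟪bT (Pi.single j 1), v⟫_ℂ :=
  rfl

theorem innerPi_eq_zero_iff {bT : (Fin n → ℂ) →ₗ[ℂ] H} {v : H} :
    innerPi bT v = 0 ↔ v ∈ (LinearMap.range bT)ᗮ := by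
  rw [Submodule.mem_orthogonal]
  constructor
  · rintro h _ ⟨c, rfl⟩
    rw [← (Pi.basisFun ℂ (Fin n)).sum_repr c, map_sum, sum_inner]
    refine Finset.sum_eq_zero fun j _ => ?_
    rw [map_smul, inner_smul_left, Pi.basisFun_apply, ← innerPi_apply, h, Pi.zero_apply,
      mul_zero]
  · intro h
    ext j
    exact h _ ⟨_, rfl⟩

theorem innerPi_surjective {bT : (Fin n → ℂ) →ₗ[ℂ] H} (hb : Function.Injective bT) :
    Function.Surjective (innerPi bT) := by
  set W := LinearMap.range bT
  have hW : Module.finrank ℂ W = Module.finrank ℂ (Fin n → ℂ) :=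
    LinearMap.finrank_range_of_inj hb
  have hinj : Function.Injective (innerPi bT ∘ₗ W.subtype) := by
    rw [← LinearMap.ker_eq_bot, Submodule.eq_bot_iff]
    intro w hw
    have hw' : (w : H) ∈ W ⊓ Wᗮ := ⟨w.2, innerPi_eq_zero_iff.1 hw⟩
    rw [W.inf_orthogonal_eq_bot, Submodule.mem_bot] at hw'
    exact Subtype.ext hw'
  intro d
  obtain ⟨w, rfl⟩ := (LinearMap.injective_iff_surjective_of_finrank_eq_finrank hW).1 hinj d
  exact ⟨w, rfl⟩

end InnerPi

section Defect

variable {n : ℕ} (Ainv : H →L[ℂ] H)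

def defect : H × H →ₗ[ℂ] H :=
  LinearMap.fst ℂ H H - (Ainv : H →ₗ[ℂ] H) ∘ₗ LinearMap.snd ℂ H H

@[simp]
theorem defect_apply (p : H × H) : defect Ainv p = p.1 - Ainv p.2 :=
  rfl

/-- The graph of `L(A, a, b, κ)`, written with `A⁻¹` instead of `A`. -/
def pertSubmodule (aT bT : (Fin n → ℂ) →ₗ[ℂ] H) (κ : Matrix (Fin n) (Fin n) ℂ) :
    Submodule ℂ (H × H) where
  carrier := {p | ∃ c, defect Ainv p = aT c ∧ κ *ᵥ c + innerPi bT p.2 = 0}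
  zero_mem' := ⟨0, by simp⟩
  add_mem' := by
    rintro p q ⟨c, hc, hκc⟩ ⟨d, hd, hκd⟩
    refine ⟨c + d, by rw [map_add, map_add, hc, hd], ?_⟩
    rw [Matrix.mulVec_add, Prod.snd_add, map_add, add_add_add_comm, hκc, hκd, add_zero]
  smul_mem' := by
    rintro s p ⟨c, hc, hκc⟩
    refine ⟨s • c, by rw [map_smul, map_smul, hc], ?_⟩
    rw [Matrix.mulVec_smul, Prod.smul_snd, map_smul, ← smul_add, hκc, smul_zero]

variable {Ainv} {aT bT : (Fin n → ℂ) →ₗ[ℂ] H} {κ : Matrix (Fin n) (Fin n) ℂ}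

theorem graph_eq_ker_defect {A : H →ₗ.[ℂ] H} (hAinv1 : ∀ x : A.domain, Ainv (A x) = x)
    (hAinv2 : ∀ v : H, ∃ h : Ainv v ∈ A.domain, A ⟨Ainv v, h⟩ = v) :
    A.graph = ker (defect Ainv) := by
  ext p
  rw [A.mem_graph_iff, LinearMap.mem_ker, defect_apply, sub_eq_zero]
  constructor
  · rintro ⟨y, h1, h2⟩
    rw [← h1, ← h2, hAinv1]
  · intro h
    exact ⟨⟨Ainv p.2, (hAinv2 _).1⟩, h.symm, (hAinv2 _).2⟩

theorem pertGraph_eq {A : H →ₗ.[ℂ] H} (hAinv1 : ∀ x : A.domain, Ainv (A x) = x)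
    (hAinv2 : ∀ v : H, ∃ h : Ainv v ∈ A.domain, A ⟨Ainv v, h⟩ = v) :
    pertGraph n A.domain (fun y₀ => A y₀) aT bT κ = pertSubmodule Ainv aT bT κ := by
  ext p
  constructor
  · rintro ⟨y₀, c, h1, h2, hκ⟩
    beta_reduce at h2 hκ
    refine ⟨c, ?_, funext fun j => by rw [Pi.add_apply, h2]; exact hκ j⟩
    rw [defect_apply, h1, h2, hAinv1, add_sub_cancel_left]
  · rintro ⟨c, hc, hκ⟩
    obtain ⟨hdom, hA⟩ := hAinv2 p.2
    refine ⟨⟨Ainv p.2, hdom⟩, c, ?_, hA.symm, fun j => ?_⟩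
    · rw [defect_apply, sub_eq_iff_eq_add'] at hc
      exact hc
    · beta_reduce
      rw [hA]
      exact congrFun hκ j

theorem condA_iff {A : H →ₗ.[ℂ] H} (hAinv1 : ∀ x : A.domain, Ainv (A x) = x)
    (hAinv2 : ∀ v : H, ∃ h : Ainv v ∈ A.domain, A ⟨Ainv v, h⟩ = v)
    (ha : Function.Injective aT) :
    CondA n A aT bT κ ↔ ∀ w, ((0 : H), w) ∈ pertSubmodule Ainv aT bT κ → w = 0 := by
  constructor
  · rintro hA w ⟨c, hc, hκ⟩
    obtain ⟨hdom, hAw⟩ := hAinv2 w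
    have haw : aT (-c) = Ainv w := by
      rw [map_neg, ← hc, defect_apply, zero_sub, neg_neg]
    have hc0 : -c = 0 := by
      refine hA (-c) (haw ▸ hdom) fun j => ?_
      have hκj := congrFun hκ j
      rw [Pi.add_apply, innerPi_apply, Pi.zero_apply, ← eq_neg_iff_add_eq_zero] at hκj
      simp only [haw, hAw, Matrix.mulVec_neg, Pi.neg_apply, hκj, neg_neg]
    calc w = A ⟨Ainv w, hdom⟩ := hAw.symm
      _ = A 0 := by congr 1; exact Subtype.ext (show Ainv w = 0 by rw [← haw, hc0, map_zero])
      _ = 0 := A.map_zero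
  · intro hS c hdom hκ
    have hw : Ainv (A ⟨aT c, hdom⟩) = aT c := hAinv1 _
    have hw0 : A ⟨aT c, hdom⟩ = 0 := by
      refine hS _ ⟨-c, by rw [defect_apply, hw, map_neg, zero_sub], ?_⟩
      ext j
      rw [Pi.add_apply, Matrix.mulVec_neg, Pi.neg_apply, hκ j, innerPi_apply, neg_add_cancel,
        Pi.zero_apply]
    apply ha
    rw [← hw, hw0, map_zero, map_zero]

end Defect

section Balanced

variable {n : ℕ} {Ainv : H →L[ℂ] H} {aT bT : (Fin n → ℂ) →ₗ[ℂ] H}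
  {κ : Matrix (Fin n) (Fin n) ℂ}

theorem quotRankEq_of_surjective {G G' : Submodule ℂ (H × H)} (g : G →ₗ[ℂ] (Fin n → ℂ))
    (hg : Function.Surjective g) (hker : ker g = (G ⊓ G').comap G.subtype) :
    QuotRankEq G G' n := by
  have h := rank_quotient_eq_of_surjective g hg hker
  rwa [rank_fin_fun, Cardinal.lift_natCast, Cardinal.lift_eq_nat_iff] at h

theorem quotRankEq_ker_defect_pertSubmodule (ha : Function.Injective aT)
    (hb : Function.Injective bT) :
    QuotRankEq (ker (defect Ainv)) (pertSubmodule Ainv aT bT κ) n := by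
  refine quotRankEq_of_surjective
    (innerPi bT ∘ₗ LinearMap.snd ℂ H H ∘ₗ (ker (defect Ainv)).subtype) ?_ ?_
  · intro d
    obtain ⟨w, rfl⟩ := innerPi_surjective hb d
    exact ⟨⟨(Ainv w, w), by simp⟩, rfl⟩
  · ext ⟨p, hp⟩
    rw [LinearMap.mem_ker] at hp
    simp only [LinearMap.mem_ker, LinearMap.coe_comp, Function.comp_apply,
      Submodule.subtype_apply, LinearMap.snd_apply, Submodule.mem_comap, Submodule.mem_inf, hp,
      true_and]
    constructor
    · intro h
      exact ⟨0, by rw [hp, map_zero], by rw [Matrix.mulVec_zero, zero_add, h]⟩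
    · rintro ⟨c, hc, hκ⟩
      obtain rfl : c = 0 := ha (by rw [← hc, hp, map_zero])
      rwa [Matrix.mulVec_zero, zero_add] at hκ

theorem quotRankEq_pertSubmodule_ker_defect (ha : Function.Injective aT)
    (hb : Function.Injective bT) :
    QuotRankEq (pertSubmodule Ainv aT bT κ) (ker (defect Ainv)) n := by
  obtain ⟨gl, hgl⟩ := aT.exists_leftInverse_of_injective (LinearMap.ker_eq_bot.2 ha)
  have hgl_apply : ∀ c, gl (aT c) = c := fun c => LinearMap.congr_fun hgl c
  refine quotRankEq_of_surjective (gl ∘ₗ defect Ainv ∘ₗ (pertSubmodule Ainv aT bT κ).subtype)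
    ?_ ?_
  · intro c
    obtain ⟨w, hw⟩ := innerPi_surjective hb (-(κ *ᵥ c))
    have hp : (Ainv w + aT c, w) ∈ pertSubmodule Ainv aT bT κ :=
      ⟨c, by rw [defect_apply, add_sub_cancel_left], by rw [hw, add_neg_cancel]⟩
    refine ⟨⟨_, hp⟩, ?_⟩
    simp [hgl_apply]
  · ext ⟨p, c, hc, hκ⟩
    simp only [LinearMap.mem_ker, LinearMap.coe_comp, Function.comp_apply,
      Submodule.subtype_apply, Submodule.mem_comap, Submodule.mem_inf, hc, hgl_apply,
      map_eq_zero_iff aT ha]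
    exact ⟨fun h => ⟨⟨c, hc, hκ⟩, h⟩, And.right⟩

end Balanced

section Existence

variable {n : ℕ} {Ainv : H →L[ℂ] H} {aT bT : (Fin n → ℂ) →ₗ[ℂ] H}
  {κ : Matrix (Fin n) (Fin n) ℂ} {A : H →ₗ.[ℂ] H}

theorem exists_graph_eq_pertGraph (hAinv1 : ∀ x : A.domain, Ainv (A x) = x)
    (hAinv2 : ∀ v : H, ∃ h : Ainv v ∈ A.domain, A ⟨Ainv v, h⟩ = v)
    (ha : Function.Injective aT) (hb : Function.Injective bT) (hcond : CondA n A aT bT κ) :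
    ∃ L : H →ₗ.[ℂ] H,
      (L.graph : Set (H × H)) = pertGraph n A.domain (fun y₀ => A y₀) aT bT κ ∧
      IsBalancedPert n A.graph L.graph := by
  have hS := (condA_iff hAinv1 hAinv2 ha).1 hcond
  refine ⟨(pertSubmodule Ainv aT bT κ).toLinearPMap, ?_⟩
  rw [Submodule.toLinearPMap_graph_eq _ fun p hp hp1 => hS p.2 (by rwa [← hp1]),
    pertGraph_eq hAinv1 hAinv2, graph_eq_ker_defect hAinv1 hAinv2]
  exact ⟨rfl, quotRankEq_ker_defect_pertSubmodule ha hb,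
    quotRankEq_pertSubmodule_ker_defect ha hb⟩

theorem rank_quotient_comap_prod_id {G : Submodule ℂ (H × H)}
    (hG : QuotRankEq (ker (defect Ainv)) G n) :
    Module.rank ℂ (H ⧸ G.comap ((Ainv : H →ₗ[ℂ] H).prod LinearMap.id)) = n := by
  set N := (ker (defect Ainv) ⊓ G).comap (ker (defect Ainv)).subtype
  let Γ : H →ₗ[ℂ] ker (defect Ainv) :=
    LinearMap.codRestrict _ ((Ainv : H →ₗ[ℂ] H).prod LinearMap.id) fun v => by simp
  have hΓ : Function.Surjective Γ := by
    rintro ⟨p, hp⟩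
    exact ⟨p.2, Subtype.ext (Prod.ext (sub_eq_zero.1 hp).symm rfl)⟩
  have hker : ker (N.mkQ ∘ₗ Γ) = G.comap ((Ainv : H →ₗ[ℂ] H).prod LinearMap.id) := by
    ext v
    rw [LinearMap.mem_ker, LinearMap.comp_apply, Submodule.mkQ_apply,
      Submodule.Quotient.mk_eq_zero, Submodule.mem_comap, Submodule.mem_inf,
      Submodule.subtype_apply]
    exact and_iff_right (Γ v).2
  have h := rank_quotient_eq_of_surjective (N.mkQ ∘ₗ Γ)
    (by rw [LinearMap.coe_comp]; exact N.mkQ_surjective.comp hΓ) hker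
  rw [Cardinal.lift_id, Cardinal.lift_id] at h
  exact h.trans hG

theorem exists_injective_innerPi_eq_zero_iff [CompleteSpace H] {M : Submodule ℂ H}
    (hM : IsClosed (M : Set H)) (hMn : Module.rank ℂ (H ⧸ M) = n) :
    ∃ bT : (Fin n → ℂ) →ₗ[ℂ] H, Function.Injective bT ∧ ∀ v, innerPi bT v = 0 ↔ v ∈ M := by
  have : CompleteSpace M := hM.completeSpace_coe
  have hrank : Module.rank ℂ Mᗮ = n := by
    rw [← (M.quotientEquivOfIsCompl Mᗮ M.isCompl_orthogonal).rank_eq, hMn]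
  have := Module.finite_of_rank_eq_nat hrank
  let e : (Fin n → ℂ) ≃ₗ[ℂ] Mᗮ := LinearEquiv.ofFinrankEq _ _ (by
    rw [Module.finrank_fin_fun, Module.finrank_eq_of_rank_eq hrank])
  refine ⟨Mᗮ.subtype ∘ₗ e.toLinearMap, Mᗮ.injective_subtype.comp e.injective, fun v => ?_⟩
  rw [innerPi_eq_zero_iff, LinearMap.range_comp, LinearEquiv.range, Submodule.map_top,
    Submodule.range_subtype, Submodule.orthogonal_orthogonal]

theorem eq_pertSubmodule_of_complement {P : Submodule ℂ (H × H)}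
    {ξ : (Fin n → ℂ) →ₗ[ℂ] H × H} (hξP : ∀ c, ξ c ∈ P)
    (hξ : ∀ p ∈ P, ∃ c, p - ξ c ∈ ker (defect Ainv))
    (hβ : ∀ v, innerPi bT v = 0 ↔ (Ainv v, v) ∈ P) :
    P = pertSubmodule Ainv (defect Ainv ∘ₗ ξ) bT
      (-LinearMap.toMatrix' (innerPi bT ∘ₗ LinearMap.snd ℂ H H ∘ₗ ξ)) := by
  have hκ : ∀ c, -LinearMap.toMatrix' (innerPi bT ∘ₗ LinearMap.snd ℂ H H ∘ₗ ξ) *ᵥ c =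
      -innerPi bT (ξ c).2 := by
    simp [Matrix.neg_mulVec, LinearMap.toMatrix'_mulVec]
  have hgraph : ∀ g ∈ ker (defect Ainv), g = (Ainv g.2, g.2) :=
    fun g hg => Prod.ext (sub_eq_zero.1 hg) rfl
  ext p
  constructor
  · intro hp
    obtain ⟨c, hc⟩ := hξ p hp
    have hgP : (Ainv (p - ξ c).2, (p - ξ c).2) ∈ P := hgraph _ hc ▸ P.sub_mem hp (hξP c)
    refine ⟨c, sub_eq_zero.1 (by rwa [LinearMap.comp_apply, ← map_sub]), ?_⟩
    rw [hκ, neg_add_eq_sub, ← map_sub, ← Prod.snd_sub]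
    exact (hβ _).2 hgP
  · rintro ⟨c, hc, hκc⟩
    have hg : p - ξ c ∈ ker (defect Ainv) := by
      rw [LinearMap.mem_ker, map_sub, sub_eq_zero]
      exact hc
    have hgP : p - ξ c ∈ P := by
      rw [hgraph _ hg]
      refine (hβ _).1 ?_
      rw [Prod.snd_sub, map_sub, sub_eq_neg_add, ← hκ]
      exact hκc
    simpa using P.add_mem hgP (hξP c)

theorem exists_nData_of_isBalancedPert [CompleteSpace H]
    (hAinv1 : ∀ x : A.domain, Ainv (A x) = x)
    (hAinv2 : ∀ v : H, ∃ h : Ainv v ∈ A.domain, A ⟨Ainv v, h⟩ = v)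
    (L : H →ₗ.[ℂ] H) (hL : IsClosed (L.graph : Set (H × H)))
    (hbal : IsBalancedPert n A.graph L.graph) :
    ∃ (aT bT : (Fin n → ℂ) →ₗ[ℂ] H) (κ : Matrix (Fin n) (Fin n) ℂ),
      Function.Injective aT ∧ Function.Injective bT ∧ CondA n A aT bT κ ∧
      (L.graph : Set (H × H)) = pertGraph n A.domain (fun y₀ => A y₀) aT bT κ := by
  rw [graph_eq_ker_defect hAinv1 hAinv2] at hbal
  obtain ⟨bT, hb, hβ⟩ := exists_injective_innerPi_eq_zero_iff
    (M := L.graph.comap ((Ainv : H →ₗ[ℂ] H).prod LinearMap.id))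
    (hL.preimage (Ainv.continuous.prodMk continuous_id)) (rank_quotient_comap_prod_id hbal.1)
  obtain ⟨ξ, hξL, hξA, hξ⟩ := exists_linearMap_complement_of_rank hbal.2
  have ha : Function.Injective (defect Ainv ∘ₗ ξ) := (injective_iff_map_eq_zero _).2 hξA
  have hLS := eq_pertSubmodule_of_complement hξL hξ hβ
  refine ⟨_, bT, _, ha, hb, (condA_iff hAinv1 hAinv2 ha).2 fun w hw => ?_, by
    rw [hLS, pertGraph_eq hAinv1 hAinv2]⟩
  rw [← hLS] at hw
  exact L.mem_graph_snd_inj hw L.graph.zero_mem rfl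

end Existence

variable [CompleteSpace H]

theorem pert_balanced_iff_n_data_general
    (n : ℕ) (A : H →ₗ.[ℂ] H)
    -- 0 lies in the resolvent set of A
    (Ainv : H →L[ℂ] H)
    (hAinv1 : ∀ x : A.domain, Ainv (A x) = (x : H))
    (hAinv2 : ∀ v : H, ∃ h : Ainv v ∈ A.domain, A ⟨Ainv v, h⟩ = v) :
    -- (1)
    (∀ (aT bT : (Fin n → ℂ) →ₗ[ℂ] H) (κ : Matrix (Fin n) (Fin n) ℂ),
      Function.Injective aT → Function.Injective bT → CondA n A aT bT κ →
      ∃ L : H →ₗ.[ℂ] H,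
        (L.graph : Set (H × H)) = pertGraph n A.domain (fun y₀ => A y₀) aT bT κ ∧
        IsBalancedPert n A.graph L.graph) ∧
    -- (2)
    (∀ L : H →ₗ.[ℂ] H, IsClosed (L.graph : Set (H × H)) →
      IsBalancedPert n A.graph L.graph →
      ∃ (aT bT : (Fin n → ℂ) →ₗ[ℂ] H) (κ : Matrix (Fin n) (Fin n) ℂ),
        Function.Injective aT ∧ Function.Injective bT ∧ CondA n A aT bT κ ∧
        (L.graph : Set (H × H)) = pertGraph n A.domain (fun y₀ => A y₀) aT bT κ) :=
  ⟨fun _ _ _ ha hb hcond => exists_graph_eq_pertGraph hAinv1 hAinv2 ha hb hcond,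
    fun L hL hbal => exists_nData_of_isBalancedPert hAinv1 hAinv2 L hL hbal⟩

/-- **Proposition.** (1) For each n-data `(a,b,κ)` for `A`, the operator `L(A,a,b,κ)` is a
balanced rank `n` singular perturbation of `A`; (2) conversely, every balanced rank `n`
singular perturbation of `A` has the form `L(A,a,b,κ)` for some n-data. -/
theorem pert_balanced_iff_n_data
    (n : ℕ) (A : H →ₗ.[ℂ] H)
    (hdense : Dense (A.domain : Set H))
    (hclosed : IsClosed (A.graph : Set (H × H)))
    -- 0 lies in the resolvent set of A
    (Ainv : H →L[ℂ] H)
    (hAinv1 : ∀ x : A.domain, Ainv (A x) = (x : H))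
    (hAinv2 : ∀ v : H, ∃ h : Ainv v ∈ A.domain, A ⟨Ainv v, h⟩ = v) :
    -- (1)
    (∀ (aT bT : (Fin n → ℂ) →ₗ[ℂ] H) (κ : Matrix (Fin n) (Fin n) ℂ),
      Function.Injective aT → Function.Injective bT → CondA n A aT bT κ →
      ∃ L : H →ₗ.[ℂ] H,
        (L.graph : Set (H × H)) = pertGraph n A.domain (fun y₀ => A y₀) aT bT κ ∧
        IsBalancedPert n A.graph L.graph) ∧
    -- (2)
    (∀ L : H →ₗ.[ℂ] H, IsClosed (L.graph : Set (H × H)) →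
      IsBalancedPert n A.graph L.graph →
      ∃ (aT bT : (Fin n → ℂ) →ₗ[ℂ] H) (κ : Matrix (Fin n) (Fin n) ℂ),
        Function.Injective aT ∧ Function.Injective bT ∧ CondA n A aT bT κ ∧
        (L.graph : Set (H × H)) = pertGraph n A.domain (fun y₀ => A y₀) aT bT κ) :=
  pert_balanced_iff_n_data_general n A Ainv hAinv1 hAinv2
end

section
/- (1) The operator L(A,a,b,κ) is densely defined if and only if the n-data (a,b,κ) satisfy condition (Aₙ*): for every d ∈ ℂⁿ, if b̃d ∈ D(A*) and κ*d = (⟨A*(b̃d), ãe_j⟩)_{j=1}^n (where κ* is the adjoint matrix of κ), then d = 0. (2) If (Aₙ*) holds, then the Hilbert-space adjoint of L(A,a,b,κ) equals L(A*, b, a, κ*), i.e., the operator constructed from the n-data (b̃, ã, κ*) for A*. -/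
/-!
Since `A` and `A*` are onto, write `w = A* u₀`. Testing a pair `(v, w)` against the graph of `L`
(in the sense of graph adjoints) first shows `v - u₀ ⊥ ker b̃* = (ran b̃)ᗮ`, so `v = u₀ + b̃d`, and
then, testing against the directions `ãc`, that `ã* w = -κ* d`; conversely such pairs annihilate
the graph of `L` by a direct computation. So the graph adjoint of `L` is the graph of
`L(A*, b, a, κ*)`. Density of `D(L)` means that this graph adjoint contains no pair `(0, u)` with
`u ≠ 0`, which is `(Aₙ*)` because `A*` and `b̃` are injective.
-/

open Complex

noncomputable section

variable {H : Type*} [NormedAddCommGroup H] [InnerProductSpace ℂ H] [CompleteSpace H]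

/-- Condition `(Aₙ*)` on the n-data `(ã, b̃, κ)` for `A`:
if `b̃d ∈ D(A*)` and `κ*d = (⟨A*(b̃d), ãe_j⟩)_j`, then `d = 0`. -/
def CondAstar (n : ℕ) (A : H →ₗ.[ℂ] H)
    (aT bT : (Fin n → ℂ) →ₗ[ℂ] H) (κ : Matrix (Fin n) (Fin n) ℂ) : Prop :=
  ∀ (d : Fin n → ℂ) (h : bT d ∈ A.adjoint.domain),
    (∀ j, κ.conjTranspose.mulVec d j = inner (𝕜 := ℂ) (aT (Pi.single j 1)) (A.adjoint ⟨bT d, h⟩)) →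
    d = 0


open scoped InnerProductSpace LinearPMap Matrix ComplexOrder

section Coefficients

variable {E : Type*} [NormedAddCommGroup E] [InnerProductSpace ℂ E] {n : ℕ}

/-- `T* v` for the standard inner product on `ℂⁿ`. -/
def coeffVec (T : (Fin n → ℂ) →ₗ[ℂ] E) : E →ₗ[ℂ] Fin n → ℂ :=
  LinearMap.pi fun j => innerₛₗ ℂ (E := E) (T (Pi.single j 1))

@[simp]
theorem coeffVec_apply (T : (Fin n → ℂ) →ₗ[ℂ] E) (v : E) (j : Fin n) :
    coeffVec T v j = ⟪T (Pi.single j 1), v⟫_ℂ :=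
  rfl

theorem inner_map_eq_dotProduct (T : (Fin n → ℂ) →ₗ[ℂ] E) (c : Fin n → ℂ) (v : E) :
    ⟪T c, v⟫_ℂ = star c ⬝ᵥ coeffVec T v := by
  conv_lhs => rw [← Finset.univ_sum_single c]
  rw [map_sum, sum_inner]
  refine Finset.sum_congr rfl fun j _ => ?_
  rw [← mul_one (c j), ← smul_eq_mul, Pi.single_smul', map_smul, inner_smul_left]
  rfl

theorem ker_coeffVec (T : (Fin n → ℂ) →ₗ[ℂ] E) :
    LinearMap.ker (coeffVec T) = (LinearMap.range T)ᗮ := by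
  ext z
  simp only [LinearMap.mem_ker, Submodule.mem_orthogonal, LinearMap.mem_range,
    forall_exists_index, forall_apply_eq_imp_iff, inner_map_eq_dotProduct]
  exact ⟨fun h c => by rw [h, dotProduct_zero], fun h => dotProduct_star_self_eq_zero.1 (by
    simpa using h (coeffVec T z))⟩

theorem mem_range_of_forall_coeffVec_eq_zero {T : (Fin n → ℂ) →ₗ[ℂ] E} {r : E}
    (h : ∀ z, coeffVec T z = 0 → ⟪z, r⟫_ℂ = 0) : r ∈ LinearMap.range T := by
  rw [← (LinearMap.range T).orthogonal_orthogonal, ← ker_coeffVec]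
  exact (Submodule.mem_orthogonal _ _).2 fun z hz => h z hz

theorem coeffVec_surjective {T : (Fin n → ℂ) →ₗ[ℂ] E} (hT : Function.Injective T) :
    Function.Surjective (coeffVec T) := by
  suffices Function.Injective (coeffVec T ∘ₗ T) from
    Function.Surjective.of_comp (g := T) (LinearMap.injective_iff_surjective.1 this)
  refine (injective_iff_map_eq_zero _).2 fun c hc => hT.eq_iff' (map_zero T) |>.1 ?_
  have : T c ∈ LinearMap.range T ⊓ (LinearMap.range T)ᗮ :=
    ⟨LinearMap.mem_range_self T c, ker_coeffVec T ▸ hc⟩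
  rwa [Submodule.inf_orthogonal_eq_bot, Submodule.mem_bot] at this

theorem star_dotProduct_mulVec (κ : Matrix (Fin n) (Fin n) ℂ) (c d : Fin n → ℂ) :
    star (star d ⬝ᵥ κ *ᵥ c) = star c ⬝ᵥ κᴴ *ᵥ d := by
  rw [Matrix.star_dotProduct, star_star, Matrix.star_mulVec, Matrix.dotProduct_mulVec]

theorem exists_eq_map_of_forall_inner_eq {aT bT : (Fin n → ℂ) →ₗ[ℂ] E}
    {κ : Matrix (Fin n) (Fin n) ℂ} (hb : Function.Injective bT) {r w : E}
    (h : ∀ z c, coeffVec bT z = -(κ *ᵥ c) → ⟪z, r⟫_ℂ = ⟪aT c, w⟫_ℂ) :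
    ∃ d, bT d = r ∧ coeffVec aT w = -(κᴴ *ᵥ d) := by
  obtain ⟨d, rfl⟩ := mem_range_of_forall_coeffVec_eq_zero fun z hz => by
    simpa using h z 0 (by simpa using hz)
  refine ⟨d, rfl, ?_⟩
  have key : ∀ c, star c ⬝ᵥ coeffVec aT w = star c ⬝ᵥ -(κᴴ *ᵥ d) := fun c => by
    obtain ⟨z, hz⟩ := coeffVec_surjective hb (-(κ *ᵥ c))
    rw [← inner_map_eq_dotProduct, ← h z c hz, ← inner_conj_symm, inner_map_eq_dotProduct, hz,
      dotProduct_neg, dotProduct_neg, starRingEnd_apply, star_neg, star_dotProduct_mulVec]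
  exact dotProduct_eq _ _ fun u => by simpa [dotProduct_comm] using key (star u)

end Coefficients

namespace LinearPMap

variable {𝕜 E F : Type*} [RCLike 𝕜] [NormedAddCommGroup E] [InnerProductSpace 𝕜 E]
  [NormedAddCommGroup F] [InnerProductSpace 𝕜 F]

theorem mem_domain_orthogonal_iff (T : E →ₗ.[𝕜] F) (u : E) :
    u ∈ T.domainᗮ ↔ ((0 : F), u) ∈ T.graph.adjoint := by
  simp [Submodule.mem_orthogonal, mem_graph_iff]

theorem dense_domain_iff [CompleteSpace E] (T : E →ₗ.[𝕜] F) :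
    Dense (T.domain : Set E) ↔ ∀ u, ((0 : F), u) ∈ T.graph.adjoint → u = 0 := by
  rw [Submodule.dense_iff_topologicalClosure_eq_top, Submodule.topologicalClosure_eq_top_iff,
    Submodule.eq_bot_iff]
  simp only [mem_domain_orthogonal_iff]

variable [CompleteSpace E] {T : E →ₗ.[𝕜] F} (hT : Dense (T.domain : Set E))
include hT

theorem adjoint_surjective [CompleteSpace F] (S : F →L[𝕜] E) (hS : ∀ x : T.domain, S (T x) = x) :
    Function.Surjective T† := by
  intro w
  have key : ∀ x : T.domain, ⟪w, x⟫_𝕜 = ⟪ContinuousLinearMap.adjoint S w, T x⟫_𝕜 := fun x => by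
    rw [ContinuousLinearMap.adjoint_inner_left, hS]
  exact ⟨⟨_, mem_adjoint_domain_of_exists _ ⟨w, key⟩⟩, adjoint_apply_eq hT _ key⟩

theorem adjoint_injective (hsurj : Function.Surjective T) : Function.Injective T† := by
  intro x y hxy
  refine Subtype.ext (ext_inner_right 𝕜 fun v => ?_)
  obtain ⟨z, rfl⟩ := hsurj v
  rw [← adjoint_isFormalAdjoint hT x z, ← adjoint_isFormalAdjoint hT y z, hxy]

end LinearPMap

section Perturbation

variable {E : Type*} [NormedAddCommGroup E] [InnerProductSpace ℂ E] {n : ℕ}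
  {aT bT : (Fin n → ℂ) →ₗ[ℂ] E} {κ : Matrix (Fin n) (Fin n) ℂ}

theorem mem_pertGraph_iff {dom : Submodule ℂ E} {Tf : dom → E} {p : E × E} :
    p ∈ pertGraph n dom Tf aT bT κ ↔
      ∃ (y : dom) (c : Fin n → ℂ), p = ((y : E) + aT c, Tf y) ∧ coeffVec bT (Tf y) = -(κ *ᵥ c) := by
  simp only [pertGraph, Set.mem_ofPred_eq, Prod.ext_iff, eq_neg_iff_add_eq_zero, funext_iff,
    Pi.add_apply, Pi.zero_apply, coeffVec_apply, add_comm (inner ℂ _ _), and_assoc]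

theorem inner_eq_of_mem_pertGraph {T S : E →ₗ.[ℂ] E} (hTS : T.IsFormalAdjoint S) {p q : E × E}
    (hp : p ∈ pertGraph n T.domain (fun y => T y) aT bT κ)
    (hq : q ∈ pertGraph n S.domain (fun u => S u) bT aT κᴴ) :
    ⟪p.2, q.1⟫_ℂ = ⟪p.1, q.2⟫_ℂ := by
  obtain ⟨y, c, rfl, hc⟩ := mem_pertGraph_iff.1 hp
  obtain ⟨u, d, rfl, hd⟩ := mem_pertGraph_iff.1 hq
  have hcross : ⟪T y, bT d⟫_ℂ = ⟪aT c, S u⟫_ℂ := by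
    rw [← inner_conj_symm, inner_map_eq_dotProduct, inner_map_eq_dotProduct, hc, hd,
      dotProduct_neg, dotProduct_neg, starRingEnd_apply, star_neg, star_dotProduct_mulVec]
  simp only [inner_add_left, inner_add_right, hTS y u, hcross]

end Perturbation

section AdjointPerturbation

variable {n : ℕ} {aT bT : (Fin n → ℂ) →ₗ[ℂ] H} {κ : Matrix (Fin n) (Fin n) ℂ} {A : H →ₗ.[ℂ] H}

theorem mem_adjoint_iff_mem_pertGraph (hdense : Dense (A.domain : Set H))
    (hsurj : Function.Surjective A) (hsurj_adj : Function.Surjective A†)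
    (hb : Function.Injective bT) {g : Submodule ℂ (H × H)}
    (hg : (g : Set (H × H)) = pertGraph n A.domain (fun y => A y) aT bT κ) (q : H × H) :
    q ∈ g.adjoint ↔ q ∈ pertGraph n A†.domain (fun u => A† u) bT aT κᴴ := by
  have hformal := (A.adjoint_isFormalAdjoint hdense).symm
  constructor
  · intro hq
    obtain ⟨v, w⟩ := q
    obtain ⟨u₀, rfl⟩ := hsurj_adj w
    have key : ∀ z c, coeffVec bT z = -(κ *ᵥ c) → ⟪z, v - u₀⟫_ℂ = ⟪aT c, A† u₀⟫_ℂ := by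
      intro z c hc
      obtain ⟨y, rfl⟩ := hsurj z
      have hyc : ((y : H) + aT c, A y) ∈ g := by
        rw [← SetLike.mem_coe, hg]
        exact mem_pertGraph_iff.2 ⟨y, c, rfl, hc⟩
      have hrel := (Submodule.mem_adjoint_iff g _).1 hq _ _ hyc
      rw [sub_eq_zero, inner_add_left] at hrel
      rw [inner_sub_right, hrel, hformal y u₀, add_sub_cancel_left]
    obtain ⟨d, hd, hcoeff⟩ := exists_eq_map_of_forall_inner_eq hb key
    exact mem_pertGraph_iff.2 ⟨u₀, d, by rw [hd, add_sub_cancel], hcoeff⟩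
  · intro hq
    refine (Submodule.mem_adjoint_iff g q).2 fun a b hab => sub_eq_zero.2 ?_
    rw [← SetLike.mem_coe, hg] at hab
    exact inner_eq_of_mem_pertGraph hformal hab hq

theorem condAstar_iff (hA : Function.Injective A†) (hb : Function.Injective bT) :
    CondAstar n A aT bT κ ↔
      ∀ u, ((0 : H), u) ∈ pertGraph n A†.domain (fun u₀ => A† u₀) bT aT κᴴ → u = 0 := by
  simp only [CondAstar, mem_pertGraph_iff, Prod.ext_iff]
  constructor
  · rintro hstar u ⟨⟨x, hx⟩, d, ⟨hx0, rfl⟩, hd⟩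
    obtain rfl : x = bT (-d) := by rw [map_neg, eq_neg_iff_add_eq_zero, hx0]
    have hd0 : -d = 0 := hstar (-d) hx fun j => by
      rw [← coeffVec_apply, hd, Matrix.mulVec_neg]
    rw [show (⟨bT (-d), hx⟩ : A†.domain) = 0 from Subtype.ext (by simp [hd0]),
      LinearPMap.map_zero]
  · intro h d hd hk
    have h0 : A† ⟨bT d, hd⟩ = 0 := h _ ⟨⟨bT d, hd⟩, -d, ⟨by simp, rfl⟩, by
      rw [Matrix.mulVec_neg, neg_neg]; exact funext fun j => (hk j).symm⟩
    have hbd : (⟨bT d, hd⟩ : A†.domain) = 0 := hA (h0.trans A†.map_zero.symm)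
    exact (injective_iff_map_eq_zero bT).1 hb d (congrArg Subtype.val hbd)

end AdjointPerturbation

theorem pert_densely_defined_iff_and_adjoint_general
    (n : ℕ) (A : H →ₗ.[ℂ] H)
    (hdense : Dense (A.domain : Set H))
    -- 0 lies in the resolvent set of A
    (Ainv : H →L[ℂ] H)
    (hAinv1 : ∀ x : A.domain, Ainv (A x) = (x : H))
    (hAinv2 : ∀ v : H, ∃ h : Ainv v ∈ A.domain, A ⟨Ainv v, h⟩ = v)
    -- the n-data
    (aT bT : (Fin n → ℂ) →ₗ[ℂ] H) (κ : Matrix (Fin n) (Fin n) ℂ)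
    (hbInj : Function.Injective bT)
    -- L = L(A,a,b,κ)
    (L : H →ₗ.[ℂ] H)
    (hL : (L.graph : Set (H × H)) = pertGraph n A.domain (fun y₀ => A y₀) aT bT κ) :
    -- (1)
    (Dense (L.domain : Set H) ↔ CondAstar n A aT bT κ) ∧
    -- (2)
    (CondAstar n A aT bT κ →
      (L.adjoint.graph : Set (H × H))
        = pertGraph n A.adjoint.domain (fun u₀ => A.adjoint u₀) bT aT κ.conjTranspose) := by
  have hsurj : Function.Surjective A := fun v =>
    let ⟨h, hv⟩ := hAinv2 v
    ⟨⟨Ainv v, h⟩, hv⟩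
  have hadj : ∀ q, q ∈ L.graph.adjoint ↔ q ∈ pertGraph n A†.domain (fun u => A† u) bT aT κᴴ :=
    mem_adjoint_iff_mem_pertGraph hdense hsurj
    (LinearPMap.adjoint_surjective hdense Ainv hAinv1) hbInj hL
  have hdense_iff : Dense (L.domain : Set H) ↔ CondAstar n A aT bT κ := by
    rw [L.dense_domain_iff, condAstar_iff (LinearPMap.adjoint_injective hdense hsurj) hbInj]
    simp only [hadj]
  refine ⟨hdense_iff, fun hstar => ?_⟩
  rw [LinearPMap.adjoint_graph_eq_graph_adjoint (hdense_iff.2 hstar)]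
  exact Set.ext hadj

/-- **Proposition.** (1) `L(A,a,b,κ)` is densely defined iff the n-data satisfy `(Aₙ*)`;
(2) if `(Aₙ*)` holds, then the Hilbert-space adjoint of `L(A,a,b,κ)` equals
`L(A*, b, a, κ*)`. -/
theorem pert_densely_defined_iff_and_adjoint
    (n : ℕ) (A : H →ₗ.[ℂ] H)
    (hdense : Dense (A.domain : Set H))
    (hclosed : IsClosed (A.graph : Set (H × H)))
    -- 0 lies in the resolvent set of A
    (Ainv : H →L[ℂ] H)
    (hAinv1 : ∀ x : A.domain, Ainv (A x) = (x : H))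
    (hAinv2 : ∀ v : H, ∃ h : Ainv v ∈ A.domain, A ⟨Ainv v, h⟩ = v)
    -- the n-data
    (aT bT : (Fin n → ℂ) →ₗ[ℂ] H) (κ : Matrix (Fin n) (Fin n) ℂ)
    (haInj : Function.Injective aT) (hbInj : Function.Injective bT)
    (hA_n : CondA n A aT bT κ)
    -- L = L(A,a,b,κ)
    (L : H →ₗ.[ℂ] H)
    (hL : (L.graph : Set (H × H)) = pertGraph n A.domain (fun y₀ => A y₀) aT bT κ) :
    -- (1)
    (Dense (L.domain : Set H) ↔ CondAstar n A aT bT κ) ∧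
    -- (2)
    (CondAstar n A aT bT κ →
      (L.adjoint.graph : Set (H × H))
        = pertGraph n A.adjoint.domain (fun u₀ => A.adjoint u₀) bT aT κ.conjTranspose) :=
  pert_densely_defined_iff_and_adjoint_general n A hdense Ainv hAinv1 hAinv2 aT bT κ hbInj L hL
end
end

section
/- Let ã, b̃ : ℂⁿ → H be injective linear maps and let κ : ℂⁿ → ℂⁿ be invertible. Define the bounded operator B = A⁻¹ − ã∘κ⁻¹∘b̃° on H, where b̃° : H → ℂⁿ is given by b̃°x = (⟨x, b̃e_j⟩)_{j=1}^n (so B = A⁻¹ − (A⁻¹a)κ⁻¹(b*A⁻¹)). Then: (1) ker B = {0} (so B has an algebraic inverse defined on its range) if and only if the triple satisfies condition (Aₙ); (2) if (Aₙ) holds and κ is invertible, then L(A,a,b,κ) equals the algebraic inverse of B, i.e., D(L(A,a,b,κ)) = Ran B and L(A,a,b,κ)(Bx) = x for all x ∈ H. -/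
open Complex

noncomputable section

variable {H : Type*} [NormedAddCommGroup H] [InnerProductSpace ℂ H] [CompleteSpace H]

/-- **Proposition.** Let `κ` be invertible and `B = A⁻¹ − ãκ⁻¹b̃°`. Then (1) `ker B = 0`
iff the triple satisfies `(Aₙ)`; (2) if `(Aₙ)` holds, then `L(A,a,b,κ)` is the algebraic
inverse of `B`, i.e. the graph of `L(A,a,b,κ)` is `{(Bx, x) : x ∈ H}`. -/
theorem pert_is_inverse_of_bounded_perturbation
    (n : ℕ) (A : H →ₗ.[ℂ] H)
    (hdense : Dense (A.domain : Set H))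
    (hclosed : IsClosed (A.graph : Set (H × H)))
    -- 0 lies in the resolvent set of A
    (Ainv : H →L[ℂ] H)
    (hAinv1 : ∀ x : A.domain, Ainv (A x) = (x : H))
    (hAinv2 : ∀ v : H, ∃ h : Ainv v ∈ A.domain, A ⟨Ainv v, h⟩ = v)
    -- injective maps ã, b̃ and an invertible κ
    (aT bT : (Fin n → ℂ) →ₗ[ℂ] H)
    (haInj : Function.Injective aT) (hbInj : Function.Injective bT)
    (κ : Matrix (Fin n) (Fin n) ℂ) (hκ : IsUnit κ)
    -- the bounded operator B = A⁻¹ − (A⁻¹a)κ⁻¹(b*A⁻¹)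
    (B : H → H)
    (hB : ∀ x : H,
      B x = Ainv x - aT (κ⁻¹.mulVec fun j => inner (𝕜 := ℂ) (bT (Pi.single j 1)) x)) :
    -- (1)
    ((∀ x : H, B x = 0 → x = 0) ↔ CondA n A aT bT κ) ∧
    -- (2)
    (CondA n A aT bT κ →
      pertGraph n A.domain (fun y₀ => A y₀) aT bT κ = {p : H × H | p.1 = B p.2}) := by
  have hd : IsUnit κ.det := (Matrix.isUnit_iff_isUnit_det κ).mp hκ
  have hinvmul : ∀ v : Fin n → ℂ, κ⁻¹.mulVec (κ.mulVec v) = v := by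
    intro v
    rw [Matrix.mulVec_mulVec, Matrix.nonsing_inv_mul κ hd, Matrix.one_mulVec]
  have hmulinv : ∀ v : Fin n → ℂ, κ.mulVec (κ⁻¹.mulVec v) = v := by
    intro v
    rw [Matrix.mulVec_mulVec, Matrix.mul_nonsing_inv κ hd, Matrix.one_mulVec]
  constructor
  · constructor
    · -- ker B = 0 → CondA
      intro hker c hmem hc
      set x := A ⟨aT c, hmem⟩ with hx
      have h1 : Ainv x = aT c := hAinv1 ⟨aT c, hmem⟩
      have h2 : (fun j => inner (𝕜 := ℂ) (bT (Pi.single j 1)) x) = κ.mulVec c := by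
        funext j; exact (hc j).symm
      have hBx : B x = 0 := by
        rw [hB x, h1, h2, hinvmul, sub_self]
      have hx0 : x = 0 := hker x hBx
      have : aT c = 0 := by rw [← h1, hx0, map_zero]
      have : aT c = aT 0 := by simpa using this
      exact haInj this
    · -- CondA → ker B = 0
      intro hA x hBx
      set c : Fin n → ℂ := κ⁻¹.mulVec fun j => inner (𝕜 := ℂ) (bT (Pi.single j 1)) x with hc
      have hax : aT c = Ainv x := by
        have h0 : Ainv x - aT c = 0 := by rw [← hB x, hBx]
        exact (sub_eq_zero.mp h0).symm
      obtain ⟨hmem, heq⟩ := hAinv2 x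
      have hmem' : aT c ∈ A.domain := hax ▸ hmem
      have heq' : A ⟨aT c, hmem'⟩ = x := by
        rw [show (⟨aT c, hmem'⟩ : A.domain) = ⟨Ainv x, hmem⟩ from Subtype.ext hax]
        exact heq
      have hc0 : c = 0 := by
        apply hA c hmem'
        intro j
        rw [heq', hc, hmulinv]
      have hAinvx : Ainv x = 0 := by rw [← hax, hc0, map_zero]
      have : x = 0 := by
        rw [← heq, show (⟨Ainv x, hmem⟩ : A.domain) = 0 from Subtype.ext hAinvx]
        simp
      exact this
  · -- part (2)
    intro _
    have hneg : ∀ (M : Matrix (Fin n) (Fin n) ℂ) (v : Fin n → ℂ),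
        M.mulVec (-v) = -M.mulVec v := by
      intro M v
      ext j
      simp [Matrix.mulVec, dotProduct, mul_neg]
    ext p
    constructor
    · rintro ⟨y₀, c, h1, h2, h3⟩
      show p.1 = B p.2
      have hAy : Ainv p.2 = (y₀ : H) := by rw [h2]; exact hAinv1 y₀
      have hv : (fun j => inner (𝕜 := ℂ) (bT (Pi.single j 1)) p.2) = κ.mulVec (-c) := by
        funext j
        have := h3 j
        rw [h2, hneg, Pi.neg_apply]
        linear_combination this
      rw [hB p.2, hAy, hv, hinvmul, h1, map_neg, sub_neg_eq_add]
    · intro hp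
      have hp : p.1 = B p.2 := hp
      obtain ⟨hmem, heq⟩ := hAinv2 p.2
      refine ⟨⟨Ainv p.2, hmem⟩, -(κ⁻¹.mulVec fun j => inner (𝕜 := ℂ) (bT (Pi.single j 1)) p.2),
        ?_, ?_, ?_⟩
      · rw [hp, hB p.2, map_neg]
        abel
      · exact heq.symm
      · intro j
        show κ.mulVec _ j + inner (𝕜 := ℂ) (bT (Pi.single j 1)) (A ⟨Ainv p.2, hmem⟩) = 0
        rw [heq, hneg, Pi.neg_apply, hmulinv]
        ring_nf

end
end

section
/- For any λ in the resolvent set of A one has the equality of unbounded operators L(A,a,b,κ) − λI = L(A − λI, a, b, κ(λ)), where κ(λ) : ℂⁿ → ℂⁿ is given by κ(λ)c = κc + λ·(⟨A(A−λ)⁻¹ãc, b̃e_j⟩)_{j=1}^n (i.e., κ(λ) = κ + λ·b*(A−λ)⁻¹A⁻¹a), and on the right-hand side a and b are regarded as n-data for A − λI via the maps (A−λ)⁻¹a = (A−λ)⁻¹Aã and ((A−λ)*)⁻¹b = ((A−λ)*)⁻¹A*b̃. -/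
open Complex

noncomputable section

variable {H : Type*} [NormedAddCommGroup H] [InnerProductSpace ℂ H] [CompleteSpace H]

/-!
If `(A - λ) z = ã c`, i.e. `z = (A - λ)⁻¹ ã c`, then `A z = ã c + λ z = ã_λ c`, so
`y₀ + ã c = (y₀ - λ z) + ã_λ c`: trading the regular part `y₀` for `y₀ - λ z` matches the two
graphs. The outputs agree since `A y₀ - λ (y₀ + ã c) = (A - λ)(y₀ - λ z)`, and the boundary
conditions agree since `⟪b̃_λ e_j, (A - λ) y⟫ = ⟪b̃ e_j, A y⟫` while `κ(λ) c` absorbs exactly the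
extra term `λ ⟪b̃ e_j, A z⟫`.
-/

open scoped InnerProductSpace Matrix

section InnerMatrix

variable {𝕜 E ι : Type*} [RCLike 𝕜] [NormedAddCommGroup E] [InnerProductSpace 𝕜 E]
  [Fintype ι] [DecidableEq ι]

theorem Matrix.of_inner_mulVec (u : ι → E) (g : (ι → 𝕜) →ₗ[𝕜] E) (c : ι → 𝕜) :
    (Matrix.of fun j i => ⟪u j, g (Pi.single i 1)⟫_𝕜) *ᵥ c = fun j => ⟪u j, g c⟫_𝕜 := by
  have h : (Matrix.of fun j i => ⟪u j, g (Pi.single i 1)⟫_𝕜)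
      = LinearMap.toMatrix' (LinearMap.pi fun j => innerₛₗ 𝕜 (u j) ∘ₗ g) := by
    ext; simp
  rw [h, LinearMap.toMatrix'_mulVec]
  rfl

theorem ContinuousLinearMap.inner_add_smul_adjoint_left [CompleteSpace E] (R : E →L[𝕜] E)
    (μ : 𝕜) (b w : E) :
    ⟪b + (starRingEnd 𝕜 μ) • ContinuousLinearMap.adjoint R b, w⟫_𝕜 = ⟪b, w⟫_𝕜 + μ * ⟪b, R w⟫_𝕜 := by
  rw [inner_add_left, inner_smul_left, ContinuousLinearMap.adjoint_inner_left, RCLike.conj_conj]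

end InnerMatrix

section ResolventShift

variable {E : Type*} [NormedAddCommGroup E] [InnerProductSpace ℂ E]
  {n : ℕ} {A : E →ₗ.[ℂ] E} {aT bT a' b' : (Fin n → ℂ) →ₗ[ℂ] E}
  {κ κ' : Matrix (Fin n) (Fin n) ℂ} {lam : ℂ} {Rlam : E →L[ℂ] E}

theorem pertGraph_shift_conditions_iff
    (hR1 : ∀ x : A.domain, Rlam (A x - lam • (x : E)) = (x : E))
    (ha : ∀ c, a' c = aT c + lam • Rlam (aT c))
    (hb : ∀ j w, ⟪b' (Pi.single j 1), w⟫_ℂ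
      = ⟪bT (Pi.single j 1), w⟫_ℂ + lam * ⟪bT (Pi.single j 1), Rlam w⟫_ℂ)
    (hκ : ∀ c j, (κ' *ᵥ c) j = (κ *ᵥ c) j + lam * ⟪bT (Pi.single j 1), a' c⟫_ℂ)
    {x y : E} {c : Fin n → ℂ} {y₀ y₀' z : A.domain}
    (hz : A z - lam • (z : E) = aT c) (hy₀ : y₀ = y₀' + lam • z) :
    (x = y₀ + aT c ∧ y + lam • x = A y₀ ∧
        ∀ j, (κ *ᵥ c) j + ⟪bT (Pi.single j 1), A y₀⟫_ℂ = 0) ↔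
      (x = y₀' + a' c ∧ y = A y₀' - lam • (y₀' : E) ∧
        ∀ j, (κ' *ᵥ c) j + ⟪b' (Pi.single j 1), A y₀' - lam • (y₀' : E)⟫_ℂ = 0) := by
  have hAz : A z = a' c := by rw [ha, ← hz, hR1, sub_add_cancel]
  have hAy₀ : A y₀ = A y₀' + lam • a' c := by
    rw [hy₀, LinearPMap.map_add, LinearPMap.map_smul, hAz]
  have hx : (y₀ : E) + aT c = y₀' + a' c := by
    rw [hy₀, Submodule.coe_add, Submodule.coe_smul, ← hAz, ← hz]
    abel
  have hcond : ∀ j, (κ' *ᵥ c) j + ⟪b' (Pi.single j 1), A y₀' - lam • (y₀' : E)⟫_ℂ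
      = (κ *ᵥ c) j + ⟪bT (Pi.single j 1), A y₀⟫_ℂ := by
    intro j
    rw [hκ, hb, hR1, hAy₀, inner_add_right, inner_sub_right, inner_smul_right, inner_smul_right]
    ring
  rw [← hx]
  refine and_congr_right fun hx' => and_congr ?_ (forall_congr' fun j => by rw [hcond])
  rw [← eq_sub_iff_add_eq, hx', hAy₀, hx, smul_add, add_sub_add_right_eq_sub]

theorem pertGraph_shift [CompleteSpace E]
    (hR1 : ∀ x : A.domain, Rlam (A x - lam • (x : E)) = (x : E))
    (hR2 : ∀ v : E, ∃ h : Rlam v ∈ A.domain, A ⟨Rlam v, h⟩ - lam • Rlam v = v)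
    (ha : ∀ c, a' c = aT c + lam • Rlam (aT c))
    (hb : ∀ j w, ⟪b' (Pi.single j 1), w⟫_ℂ
      = ⟪bT (Pi.single j 1), w⟫_ℂ + lam * ⟪bT (Pi.single j 1), Rlam w⟫_ℂ)
    (hκ : ∀ c j, (κ' *ᵥ c) j = (κ *ᵥ c) j + lam * ⟪bT (Pi.single j 1), a' c⟫_ℂ) :
    {p : E × E | (p.1, p.2 + lam • p.1) ∈ pertGraph n A.domain (fun y₀ => A y₀) aT bT κ}
      = pertGraph n A.domain (fun y₀ => A y₀ - lam • (y₀ : E)) a' b' κ' := by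
  ext ⟨x, y⟩
  simp only [pertGraph, Set.mem_ofPred_eq]
  constructor
  · rintro ⟨y₀, c, h⟩
    obtain ⟨hmem, hz⟩ := hR2 (aT c)
    exact ⟨y₀ - lam • ⟨_, hmem⟩, c,
      (pertGraph_shift_conditions_iff hR1 ha hb hκ hz (sub_add_cancel _ _).symm).1 h⟩
  · rintro ⟨y₀', c, h⟩
    obtain ⟨hmem, hz⟩ := hR2 (aT c)
    exact ⟨y₀' + lam • ⟨_, hmem⟩, c, (pertGraph_shift_conditions_iff hR1 ha hb hκ hz rfl).2 h⟩

end ResolventShift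

theorem pert_shift_by_lambda_general
    (n : ℕ) (A : H →ₗ.[ℂ] H)
    -- the n-data
    (aT bT : (Fin n → ℂ) →ₗ[ℂ] H) (κ : Matrix (Fin n) (Fin n) ℂ)
    -- λ lies in the resolvent set of A, with resolvent Rlam = (A − λ)⁻¹
    (lam : ℂ) (Rlam : H →L[ℂ] H)
    (hR1 : ∀ x : A.domain, Rlam (A x - lam • (x : H)) = (x : H))
    (hR2 : ∀ v : H, ∃ h : Rlam v ∈ A.domain, A ⟨Rlam v, h⟩ - lam • Rlam v = v) :
    -- the graph of L(A,a,b,κ) − λI coincides with the graph of L(A−λI, a, b, κ(λ))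
    {p : H × H | (p.1, p.2 + lam • p.1) ∈ pertGraph n A.domain (fun y₀ => A y₀) aT bT κ}
      = pertGraph n A.domain (fun y₀ => A y₀ - lam • (y₀ : H))
          (aT + lam • (Rlam.toLinearMap.comp aT))
          (bT + (starRingEnd ℂ lam) • ((ContinuousLinearMap.adjoint Rlam).toLinearMap.comp bT))
          (Matrix.of fun j i => κ j i
            + lam * inner (𝕜 := ℂ) (bT (Pi.single j 1))
                (aT (Pi.single i 1) + lam • Rlam (aT (Pi.single i 1)))) := by
  refine pertGraph_shift hR1 hR2 (fun _ => rfl)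
    (fun _ _ => Rlam.inner_add_smul_adjoint_left lam _ _) fun c j => ?_
  have hsplit : (Matrix.of fun j i => κ j i
        + lam * ⟪bT (Pi.single j 1), aT (Pi.single i 1) + lam • Rlam (aT (Pi.single i 1))⟫_ℂ)
      = κ + lam • Matrix.of fun j i =>
          ⟪bT (Pi.single j 1), (aT + lam • Rlam.toLinearMap ∘ₗ aT) (Pi.single i 1)⟫_ℂ := by
    ext; rfl
  rw [hsplit, Matrix.add_mulVec, Matrix.smul_mulVec, Matrix.of_inner_mulVec]
  rfl

/-- **Proposition.** For `λ` in the resolvent set of `A`,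
`L(A,a,b,κ) − λI = L(A − λI, a, b, κ(λ))`, where
`κ(λ) = κ + λ·b*(A−λ)⁻¹A⁻¹a` and the n-data for `A − λI` are obtained from
`ã_λ = ã + λ(A−λ)⁻¹ã` and `b̃_λ = b̃ + conj(λ)((A−λ)⁻¹)*b̃`. -/
theorem pert_shift_by_lambda
    (n : ℕ) (A : H →ₗ.[ℂ] H)
    (hdense : Dense (A.domain : Set H))
    (hclosed : IsClosed (A.graph : Set (H × H)))
    -- 0 lies in the resolvent set of A
    (Ainv : H →L[ℂ] H)
    (hAinv1 : ∀ x : A.domain, Ainv (A x) = (x : H))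
    (hAinv2 : ∀ v : H, ∃ h : Ainv v ∈ A.domain, A ⟨Ainv v, h⟩ = v)
    -- the n-data
    (aT bT : (Fin n → ℂ) →ₗ[ℂ] H) (κ : Matrix (Fin n) (Fin n) ℂ)
    (haInj : Function.Injective aT) (hbInj : Function.Injective bT)
    (hA_n : CondA n A aT bT κ)
    -- λ lies in the resolvent set of A, with resolvent Rlam = (A − λ)⁻¹
    (lam : ℂ) (Rlam : H →L[ℂ] H)
    (hR1 : ∀ x : A.domain, Rlam (A x - lam • (x : H)) = (x : H))
    (hR2 : ∀ v : H, ∃ h : Rlam v ∈ A.domain, A ⟨Rlam v, h⟩ - lam • Rlam v = v) :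
    -- the graph of L(A,a,b,κ) − λI coincides with the graph of L(A−λI, a, b, κ(λ))
    {p : H × H | (p.1, p.2 + lam • p.1) ∈ pertGraph n A.domain (fun y₀ => A y₀) aT bT κ}
      = pertGraph n A.domain (fun y₀ => A y₀ - lam • (y₀ : H))
          (aT + lam • (Rlam.toLinearMap.comp aT))
          (bT + (starRingEnd ℂ lam) • ((ContinuousLinearMap.adjoint Rlam).toLinearMap.comp bT))
          (Matrix.of fun j i => κ j i
            + lam * inner (𝕜 := ℂ) (bT (Pi.single j 1))
                (aT (Pi.single i 1) + lam • Rlam (aT (Pi.single i 1)))) :=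
  pert_shift_by_lambda_general n A aT bT κ lam Rlam hR1 hR2

end
end

section
/- There exists a constant c > 0 such that for every z with Im z > 1 and every γ ∈ ℂ with |γ| = 1 one has |γ + Θ(z)| ≥ 1 − |Θ(z)| ≥ c·Im z / (|z|² + 1). -/
open Complex ComplexConjugate Metric Set

noncomputable section

/-! By the maximum principle `‖Θ‖ < 1` on the open upper half-plane. Transporting `Θ` to the unit
disc by the Cayley transform and composing with the disc automorphism that sends `Θ(i)` to `0`,
the Schwarz lemma gives the Schwarz–Pick bound
`‖Θ(z) - Θ(i)‖ ≤ ρ ‖1 - conj Θ(i) · Θ(z)‖` with `ρ = ‖(z - i)/(z + i)‖`.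
The identity `‖1 - conj a · u‖² - ‖u - a‖² = (1 - ‖a‖²)(1 - ‖u‖²)` turns this into
`1 - ‖Θ(z)‖ ≥ (1 - ‖Θ(i)‖)(1 - ρ)/4`, and `1 - ρ ≥ Im z/(‖z‖² + 1)`. -/

theorem norm_lt_of_isPreconnected_of_not_const {E F : Type*} [NormedAddCommGroup E]
    [NormedSpace ℂ E] [NormedAddCommGroup F] [NormedSpace ℂ F] [StrictConvexSpace ℝ F]
    {f : E → F} {U : Set E} {M : ℝ} (hc : IsPreconnected U) (ho : IsOpen U)
    (hd : DiffContOnCl ℂ f U) (hle : ∀ z ∈ U, ‖f z‖ ≤ M)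
    (hnc : ¬ ∃ c, ∀ z ∈ closure U, f z = c) {z : E} (hz : z ∈ U) : ‖f z‖ < M := by
  refine (hle z hz).lt_of_ne fun hM => hnc ⟨f z, ?_⟩
  refine eqOn_closure_of_isPreconnected_of_isMaxOn_norm hc ho hd hz fun w hw => ?_
  simpa [hM] using hle w hw

theorem norm_sq_one_sub_conj_mul_sub_norm_sq_sub (a u : ℂ) :
    ‖1 - conj a * u‖ ^ 2 - ‖u - a‖ ^ 2 = (1 - ‖a‖ ^ 2) * (1 - ‖u‖ ^ 2) := by
  simp only [← normSq_eq_norm_sq, normSq_apply, mul_re, mul_im, sub_re, sub_im, one_re, one_im,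
    conj_re, conj_im]
  ring

theorem one_sub_conj_mul_ne_zero {a u : ℂ} (ha : ‖a‖ < 1) (hu : ‖u‖ ≤ 1) :
    1 - conj a * u ≠ 0 := by
  refine sub_ne_zero.2 fun h => ?_
  have : ‖conj a * u‖ < 1 := by
    rw [norm_mul, RCLike.norm_conj]
    nlinarith [norm_nonneg a, norm_nonneg u]
  simp [← h] at this

theorem norm_sub_lt_norm_one_sub_conj_mul {a u : ℂ} (ha : ‖a‖ < 1) (hu : ‖u‖ < 1) :
    ‖u - a‖ < ‖1 - conj a * u‖ := by
  have hid := norm_sq_one_sub_conj_mul_sub_norm_sq_sub a u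
  have hpos : 0 < (1 - ‖a‖ ^ 2) * (1 - ‖u‖ ^ 2) := by
    apply mul_pos <;> nlinarith [norm_nonneg a, norm_nonneg u]
  exact lt_of_pow_lt_pow_left₀ 2 (norm_nonneg _) (by linarith)

theorem one_sub_norm_ge_of_norm_sub_le_mul {a u : ℂ} {r : ℝ} (ha : ‖a‖ < 1) (hu : ‖u‖ ≤ 1)
    (hr : 0 ≤ r) (h : ‖u - a‖ ≤ r * ‖1 - conj a * u‖) :
    (1 - ‖a‖) * (1 - r) / 4 ≤ 1 - ‖u‖ := by
  rcases le_total 1 r with hr1 | hr1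
  · nlinarith [norm_nonneg a]
  set D := ‖1 - conj a * u‖
  have hD : 1 - ‖a‖ ≤ D := by
    calc 1 - ‖a‖ ≤ 1 - ‖conj a * u‖ := by
          rw [norm_mul, RCLike.norm_conj]; gcongr; exact mul_le_of_le_one_right (norm_nonneg a) hu
      _ ≤ D := by simpa using norm_sub_norm_le (1 : ℂ) (conj a * u)
  have hid := norm_sq_one_sub_conj_mul_sub_norm_sq_sub a u
  have hsq : ‖u - a‖ ^ 2 ≤ r ^ 2 * D ^ 2 := by
    rw [← mul_pow]; exact pow_le_pow_left₀ (norm_nonneg _) h 2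
  have hmain : (1 - r ^ 2) * (1 - ‖a‖) ^ 2 ≤ (1 - ‖a‖ ^ 2) * (1 - ‖u‖ ^ 2) := by
    calc (1 - r ^ 2) * (1 - ‖a‖) ^ 2 ≤ (1 - r ^ 2) * D ^ 2 := by
          gcongr
          nlinarith
      _ ≤ _ := by linarith
  have hreduced : (1 - r) * (1 + r) * (1 - ‖a‖) ≤ (1 + ‖a‖) * (1 - ‖u‖) * (1 + ‖u‖) := by
    refine le_of_mul_le_mul_left ?_ (sub_pos.2 ha)
    linear_combination hmain
  have h1r : 0 ≤ 1 - r := sub_nonneg.2 hr1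
  have h1a : 0 ≤ 1 - ‖a‖ := sub_nonneg.2 ha.le
  calc (1 - ‖a‖) * (1 - r) / 4 ≤ (1 - r) * (1 + r) * (1 - ‖a‖) / 4 := by
        nlinarith [mul_nonneg (mul_nonneg h1r h1a) hr]
    _ ≤ (1 + ‖a‖) * (1 - ‖u‖) * (1 + ‖u‖) / 4 := by gcongr
    _ ≤ 2 * (1 - ‖u‖) * 2 / 4 := by gcongr <;> linarith [sub_nonneg.2 hu]
    _ = 1 - ‖u‖ := by ring

def cayley (w : ℂ) : ℂ := I * (1 + w) / (1 - w)

def cayleyInv (z : ℂ) : ℂ := (z - I) / (z + I)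

theorem cayley_zero : cayley 0 = I := by simp [cayley]

theorem cayley_im (w : ℂ) : (cayley w).im = (1 - ‖w‖ ^ 2) / ‖1 - w‖ ^ 2 := by
  simp only [cayley, ← normSq_eq_norm_sq, div_im, mul_re, mul_im, add_re, add_im, one_re, one_im,
    I_re, I_im, sub_re, sub_im, normSq_apply]
  ring

theorem cayley_im_pos {w : ℂ} (hw : ‖w‖ < 1) : 0 < (cayley w).im := by
  have hw1 : 1 - w ≠ 0 := sub_ne_zero.2 fun h => by simp [← h] at hw
  rw [cayley_im]
  apply div_pos <;> nlinarith [norm_nonneg w, norm_pos_iff.2 hw1]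

theorem differentiableAt_cayley {w : ℂ} (hw : w ≠ 1) : DifferentiableAt ℂ cayley w := by
  unfold cayley; fun_prop (disch := exact sub_ne_zero.2 hw.symm)

theorem cayley_cayleyInv {z : ℂ} (hz : z + I ≠ 0) : cayley (cayleyInv z) = z := by
  rw [cayley, cayleyInv]
  field_simp
  ring_nf

theorem add_I_ne_zero {z : ℂ} (hz : 0 < z.im) : z + I ≠ 0 := by
  intro h; have := congrArg im h; simp at this; linarith

theorem norm_sq_add_I_sub_norm_sq_sub_I (z : ℂ) : ‖z + I‖ ^ 2 - ‖z - I‖ ^ 2 = 4 * z.im := by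
  simp only [← normSq_eq_norm_sq, normSq_apply, add_re, add_im, sub_re, sub_im, I_re, I_im]
  ring

theorem norm_cayleyInv_lt_one {z : ℂ} (hz : 0 < z.im) : ‖cayleyInv z‖ < 1 := by
  rw [cayleyInv, norm_div, div_lt_one (norm_pos_iff.2 (add_I_ne_zero hz))]
  have := norm_sq_add_I_sub_norm_sq_sub_I z
  exact lt_of_pow_lt_pow_left₀ 2 (norm_nonneg _) (by linarith)

theorem im_div_le_one_sub_norm_cayleyInv {z : ℂ} (hz : 0 < z.im) :
    z.im / (‖z‖ ^ 2 + 1) ≤ 1 - ‖cayleyInv z‖ := by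
  have hA : 0 < ‖z + I‖ := norm_pos_iff.2 (add_I_ne_zero hz)
  have hprod : (‖z + I‖ - ‖z - I‖) * (‖z + I‖ + ‖z - I‖) = 4 * z.im := by
    linear_combination norm_sq_add_I_sub_norm_sq_sub_I z
  have hA2 : ‖z + I‖ ^ 2 ≤ 2 * (‖z‖ ^ 2 + 1) := by
    have : ‖z + I‖ ^ 2 = ‖z‖ ^ 2 + 2 * z.im + 1 := by
      simp only [← normSq_eq_norm_sq, normSq_apply, add_re, add_im, I_re, I_im]; ring
    nlinarith [sq_nonneg (‖z‖ - 1), abs_im_le_norm z, le_abs_self z.im]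
  have hkey : z.im * ‖z + I‖ * (‖z + I‖ + ‖z - I‖)
      ≤ (‖z + I‖ - ‖z - I‖) * (‖z‖ ^ 2 + 1) * (‖z + I‖ + ‖z - I‖) := by
    have hBA : ‖z - I‖ ≤ ‖z + I‖ := by nlinarith [norm_nonneg (z - I)]
    calc z.im * ‖z + I‖ * (‖z + I‖ + ‖z - I‖) ≤ z.im * ‖z + I‖ * (2 * ‖z + I‖) := by
          gcongr; linarith
      _ = 2 * z.im * ‖z + I‖ ^ 2 := by ring
      _ ≤ 2 * z.im * (2 * (‖z‖ ^ 2 + 1)) := by gcongr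
      _ = _ := by linear_combination (-(‖z‖ ^ 2 + 1)) * hprod
  have := le_of_mul_le_mul_right hkey (by positivity)
  rw [cayleyInv, norm_div, one_sub_div hA.ne', le_div_iff₀ hA, div_mul_eq_mul_div,
    div_le_iff₀ (by positivity)]
  linarith

theorem norm_sub_le_norm_cayleyInv_mul {f : ℂ → ℂ}
    (hf : DifferentiableOn ℂ f {z | 0 < z.im}) (hlt : ∀ z, 0 < z.im → ‖f z‖ < 1) {z : ℂ}
    (hz : 0 < z.im) : ‖f z - f I‖ ≤ ‖cayleyInv z‖ * ‖1 - conj (f I) * f z‖ := by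
  have ha : ‖f I‖ < 1 := hlt I (by simp)
  set g : ℂ → ℂ := fun w => (f (cayley w) - f I) / (1 - conj (f I) * f (cayley w))
  have hgd : DifferentiableOn ℂ g (ball 0 1) := fun w hw => by
    rw [mem_ball_zero_iff] at hw
    have hfc : DifferentiableAt ℂ (f ∘ cayley) w :=
      (hf.differentiableAt ((isOpen_lt continuous_const continuous_im).mem_nhds
        (cayley_im_pos hw))).comp w (differentiableAt_cayley (by rintro rfl; simp at hw))
    exact ((hfc.sub_const _).div
      ((differentiableAt_const _).sub ((differentiableAt_const _).mul hfc))
      (one_sub_conj_mul_ne_zero ha (hlt _ (cayley_im_pos hw)).le)).differentiableWithinAt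
  have hgm : MapsTo g (ball 0 1) (closedBall 0 1) := fun w hw => by
    rw [mem_ball_zero_iff] at hw
    rw [mem_closedBall_zero_iff, norm_div]
    exact div_le_one_of_le₀ (norm_sub_lt_norm_one_sub_conj_mul ha (hlt _ (cayley_im_pos hw))).le
      (norm_nonneg _)
  have hg0 : g 0 = 0 := by simp [g, cayley_zero]
  have hschwarz := norm_le_norm_of_mapsTo_ball hgd hgm hg0 (norm_cayleyInv_lt_one hz)
  simp only [g, cayley_cayleyInv (add_I_ne_zero hz)] at hschwarz
  rwa [norm_div, div_le_iff₀ (norm_pos_iff.2 (one_sub_conj_mul_ne_zero ha (hlt z hz).le))]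
    at hschwarz

theorem inner_function_lower_estimate_general
    (Θ : ℂ → ℂ)
    -- Θ is analytic on the closed upper half-plane
    (hanalytic : ∀ z : ℂ, 0 ≤ z.im → AnalyticAt ℂ Θ z)
    -- |Θ| ≤ 1 on the closed upper half-plane and |Θ| = 1 on ℝ
    (hle : ∀ z : ℂ, 0 ≤ z.im → ‖Θ z‖ ≤ 1)
    -- Θ is non-constant
    (hnc : ¬ ∃ c : ℂ, ∀ z : ℂ, 0 ≤ z.im → Θ z = c) :
    ∃ c > (0:ℝ), ∀ z : ℂ, 1 < z.im → ∀ γ : ℂ, ‖γ‖ = 1 →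
      1 - ‖Θ z‖ ≤ ‖γ + Θ z‖ ∧
      c * z.im / (‖z‖ ^ 2 + 1) ≤ 1 - ‖Θ z‖ := by
  have hclosure : closure {z : ℂ | 0 < z.im} = {z | 0 ≤ z.im} := closure_setOfPred_lt_im 0
  have hdiff : DiffContOnCl ℂ Θ {z | 0 < z.im} :=
    ⟨fun z hz => (hanalytic z (le_of_lt hz)).differentiableAt.differentiableWithinAt,
      hclosure ▸ fun z hz => (hanalytic z hz).continuousAt.continuousWithinAt⟩
  have hlt : ∀ z, 0 < z.im → ‖Θ z‖ < 1 := fun z hz =>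
    norm_lt_of_isPreconnected_of_not_const (convex_halfSpace_im_gt 0).isPreconnected
      (isOpen_lt continuous_const continuous_im) hdiff (fun w hw => hle w (le_of_lt hw))
      (hclosure ▸ hnc) hz
  refine ⟨(1 - ‖Θ I‖) / 4, by linarith [hlt I (by simp)], fun z hz γ hγ => ⟨?_, ?_⟩⟩
  · simpa [hγ] using norm_sub_norm_le γ (-Θ z)
  have hz0 : 0 < z.im := by linarith
  calc (1 - ‖Θ I‖) / 4 * z.im / (‖z‖ ^ 2 + 1)
      = (1 - ‖Θ I‖) / 4 * (z.im / (‖z‖ ^ 2 + 1)) := by ring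
    _ ≤ (1 - ‖Θ I‖) / 4 * (1 - ‖cayleyInv z‖) := by
        gcongr
        · linarith [hlt I (by simp)]
        · exact im_div_le_one_sub_norm_cayleyInv hz0
    _ = (1 - ‖Θ I‖) * (1 - ‖cayleyInv z‖) / 4 := by ring
    _ ≤ 1 - ‖Θ z‖ := one_sub_norm_ge_of_norm_sub_le_mul (hlt I (by simp)) (hle z hz0.le)
        (norm_nonneg _) (norm_sub_le_norm_cayleyInv_mul hdiff.differentiableOn hlt hz0)

/-- **Lemma.** For a non-constant meromorphic inner function `Θ` (analytic on the closed
upper half-plane) there is `c > 0` such that for all `z` with `Im z > 1` and all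
unimodular `γ` one has `|γ + Θ(z)| ≥ 1 − |Θ(z)| ≥ c·Im z/(|z|² + 1)`. -/
theorem inner_function_lower_estimate
    (Θ : ℂ → ℂ)
    (hmero : MeromorphicOn Θ Set.univ)
    -- Θ is analytic on the closed upper half-plane
    (hanalytic : ∀ z : ℂ, 0 ≤ z.im → AnalyticAt ℂ Θ z)
    -- |Θ| ≤ 1 on the closed upper half-plane and |Θ| = 1 on ℝ
    (hle : ∀ z : ℂ, 0 ≤ z.im → ‖Θ z‖ ≤ 1)
    (hmod : ∀ x : ℝ, ‖Θ (x : ℂ)‖ = 1)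
    -- Θ is non-constant
    (hnc : ¬ ∃ c : ℂ, ∀ z : ℂ, 0 ≤ z.im → Θ z = c) :
    ∃ c > (0:ℝ), ∀ z : ℂ, 1 < z.im → ∀ γ : ℂ, ‖γ‖ = 1 →
      1 - ‖Θ z‖ ≤ ‖γ + Θ z‖ ∧
      c * z.im / (‖z‖ ^ 2 + 1) ≤ 1 - ‖Θ z‖ :=
  inner_function_lower_estimate_general Θ hanalytic hle hnc

end
end
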